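/- arXiv:math/0703396 — 6 statements merged into one kernel-verified Lean document; each statement's English description precedes it below -/
import Mathlib

section
/- Let k be a field of characteristic ≠ 3 containing a primitive cube root of unity, and let l = k(α) be a cubic field extension with α^3 = b ∈ k. If there exist x, y ∈ k with a·x^3 + b·y^3 = 1 (a ∈ k×), then a is a norm from l to k. -/
theorem stmt_6 (k l : Type*) [Field k] [Field l] [Algebra k l] [FiniteDimensional k l]
    (hchar : (3 : k) ≠ 0) (ω : k) (hω : IsPrimitiveRoot ω 3)
    (α : l) (b : k) (hb : α ^ 3 = algebraMap k l b)
    (hgen : IntermediateField.adjoin k {α} = ⊤)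
    (hdim : Module.finrank k l = 3)
    (a : k) (ha : a ≠ 0)
    (x y : k) (hxy : a * x ^ 3 + b * y ^ 3 = 1) :
    ∃ z : l, z ≠ 0 ∧ Algebra.norm k z = a := by
  classical
  have hint : IsIntegral k α := IsIntegral.of_finite k α
  have hdeg : (minpoly k α).natDegree = 3 := by
    have h1 := IntermediateField.adjoin.finrank hint
    rw [hgen, IntermediateField.finrank_top', hdim] at h1
    omega
  -- x ≠ 0
  have hωne : ω ≠ 1 := hω.ne_one (by norm_num)
  have hω3 : ω ^ 3 = 1 := hω.pow_eq_one
  have hωs : ω ^ 2 + ω + 1 = 0 := by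
    have h : (ω - 1) * (ω ^ 2 + ω + 1) = 0 := by linear_combination hω3
    rcases mul_eq_zero.mp h with h | h
    · exact absurd (sub_eq_zero.mp h) hωne
    · exact h
  have hx0 : x ≠ 0 := by
    rintro rfl
    have hby : b * y ^ 3 = 1 := by linear_combination hxy
    have hy : y ≠ 0 := by rintro rfl; simp at hby
    set c := y⁻¹ with hc
    have hbc : b = c ^ 3 := by rw [hc, inv_pow]; exact eq_inv_of_mul_eq_one_left hby
    set ω' := algebraMap k l ω with hω'
    set c' := algebraMap k l c with hc'
    have hω'3 : ω' ^ 3 = 1 := by rw [hω', ← map_pow, hω3, map_one]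
    have hω's : ω' ^ 2 + ω' + 1 = 0 := by
      have h0 : algebraMap k l (ω ^ 2 + ω + 1) = 0 := by rw [hωs, map_zero]
      simpa [map_add, map_pow, map_one, hω'] using h0
    have hfac : (α - c') * (α - ω' * c') * (α - ω' ^ 2 * c') = 0 := by
      have hb' : α ^ 3 = c' ^ 3 := by rw [hb, hbc, map_pow]
      linear_combination hb' + (c' ^ 2 * α - c' * α ^ 2) * hω's + (c' ^ 2 * α - c' ^ 3) * hω'3
    have hrange : ∃ d : k, α = algebraMap k l d := by
      rcases mul_eq_zero.mp hfac with h | h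
      · rcases mul_eq_zero.mp h with h | h
        · exact ⟨c, by rw [sub_eq_zero.mp h, hc']⟩
        · exact ⟨ω * c, by rw [sub_eq_zero.mp h, hω', hc', map_mul]⟩
      · exact ⟨ω ^ 2 * c, by rw [sub_eq_zero.mp h, hω', hc', map_mul, map_pow]⟩
    obtain ⟨d, rfl⟩ := hrange
    rw [minpoly.eq_X_sub_C] at hdeg
    simp [Polynomial.natDegree_X_sub_C] at hdeg
  -- power basis
  set pb : PowerBasis k l :=
    (IntermediateField.adjoin.powerBasis hint).map
      ((IntermediateField.equivOfEq hgen).trans IntermediateField.topEquiv) with hpb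
  have hpbgen : pb.gen = α := by
    simp [hpb, IntermediateField.adjoin.powerBasis]
  have hpbdim : pb.dim = 3 := by
    simp [hpb, IntermediateField.adjoin.powerBasis, hdeg]
  set B : Module.Basis (Fin 3) k l := pb.basis.reindex (finCongr hpbdim) with hBdef
  have hB : ∀ i : Fin 3, B i = α ^ (i : ℕ) := by
    intro i
    rw [hBdef, Module.Basis.reindex_apply, pb.basis_eq_pow, hpbgen]
    congr 1
  set u : k := x⁻¹ with hu
  set v : k := -(y * x⁻¹) with hv
  set z : l := algebraMap k l u + algebraMap k l v * α with hz
  have hB0 : B 0 = 1 := by rw [hB]; norm_num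
  have hB1 : B 1 = α := by rw [hB]; norm_num
  have hB2 : B 2 = α ^ 2 := by rw [hB]; norm_num
  have e0 : z * B 0 = u • B 0 + v • B 1 := by
    simp only [hB0, hB1, hz, Algebra.smul_def]
    ring
  have e1 : z * B 1 = u • B 1 + v • B 2 := by
    simp only [hB1, hB2, hz, Algebra.smul_def]
    ring
  have e2 : z * B 2 = (v * b) • B 0 + u • B 2 := by
    simp only [hB0, hB2, hz, Algebra.smul_def, map_mul]
    linear_combination (algebraMap k l v) * hb
  have hnorm : Algebra.norm k z = u ^ 3 + b * v ^ 3 := by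
    rw [Algebra.norm_eq_matrix_det B z, Matrix.det_fin_three]
    simp only [Algebra.leftMulMatrix_eq_repr_mul, e0, e1, e2, map_add, map_smul,
      Module.Basis.repr_self, Finsupp.coe_add, Finsupp.coe_smul, Pi.add_apply, Pi.smul_apply,
      Finsupp.single_apply, smul_eq_mul]
    norm_num [Fin.ext_iff]
    ring
  have hna : Algebra.norm k z = a := by
    have hx3 : x ^ 3 ≠ 0 := pow_ne_zero _ hx0
    rw [hnorm, hu, hv]
    field_simp
    linear_combination -hxy
  refine ⟨z, ?_, hna⟩
  intro hz0
  rw [hz0, Algebra.norm_zero] at hna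
  exact ha hna.symm
end

section
/- Let k be a field of characteristic ≠ 3 containing a primitive cube root of unity, and let l = k(α) be a cubic field extension with α^3 = b ∈ k. If there exist x, y ∈ k with a·x^3 + b^2·y^3 = b (a ∈ k×), then a is a norm from l to k. -/
open Polynomial IntermediateField

/-- If `β` generates a cubic extension and `p` is a monic cubic annihilating
polynomial, then the norm of `β` is `-p.coeff 0`. -/
lemma norm_cubic_aux {k l : Type*} [Field k] [Field l] [Algebra k l]
    [FiniteDimensional k l] (hdim : Module.finrank k l = 3)
    (β : l) (hgen : IntermediateField.adjoin k {β} = ⊤)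
    (p : k[X]) (hp : p.Monic) (hdeg : p.natDegree = 3) (hroot : Polynomial.aeval β p = 0) :
    Algebra.norm k β = -(p.coeff 0) := by
  have hint : IsIntegral k β := Algebra.IsIntegral.isIntegral β
  have hfr : Module.finrank k (IntermediateField.adjoin k {β}) = 3 := by
    rw [hgen, IntermediateField.finrank_top', hdim]
  have hmd : (minpoly k β).natDegree = 3 := by
    rw [← IntermediateField.adjoin.finrank hint, hfr]
  have hdvd : minpoly k β ∣ p := minpoly.dvd k β hroot
  have hpe : minpoly k β = p := by
    refine Polynomial.eq_of_monic_of_associated (minpoly.monic hint) hp ?_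
    exact associated_of_dvd_of_natDegree_le hdvd (hp.ne_zero) (by rw [hmd, hdeg])
  -- power basis with generator β
  let e : k⟮β⟯ ≃ₐ[k] l :=
    (IntermediateField.equivOfEq hgen).trans IntermediateField.topEquiv
  let pb : PowerBasis k l := (IntermediateField.adjoin.powerBasis hint).map e
  have hgenpb : pb.gen = β := by
    simp [pb, e, PowerBasis.map_gen, IntermediateField.adjoin.powerBasis_gen]
  have hdimpb : pb.dim = 3 := by
    simpa [pb, PowerBasis.map, IntermediateField.adjoin.powerBasis] using hmd
  have := Algebra.PowerBasis.norm_gen_eq_coeff_zero_minpoly pb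
  rw [hgenpb, hdimpb, hpe] at this
  rw [this]; ring

theorem stmt_7 (k l : Type*) [Field k] [Field l] [Algebra k l] [FiniteDimensional k l]
    (hchar : (3 : k) ≠ 0) (ω : k) (hω : IsPrimitiveRoot ω 3)
    (α : l) (b : k) (hb : α ^ 3 = algebraMap k l b)
    (hgen : IntermediateField.adjoin k {α} = ⊤)
    (hdim : Module.finrank k l = 3)
    (a : k) (ha : a ≠ 0)
    (x y : k) (hxy : a * x ^ 3 + b ^ 2 * y ^ 3 = b) :
    ∃ z : l, z ≠ 0 ∧ Algebra.norm k z = a := by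
  have hnotbot : IntermediateField.adjoin k {α} ≠ ⊥ := by
    intro h
    rw [h] at hgen
    have h1 : Module.finrank k (⊥ : IntermediateField k l) = 1 :=
      IntermediateField.finrank_bot
    rw [hgen, IntermediateField.finrank_top', hdim] at h1
    norm_num at h1
  -- b ≠ 0
  have hbne : b ≠ 0 := by
    intro h0
    rw [h0, map_zero] at hb
    have hα0 : α = 0 := pow_eq_zero_iff (n := 3) (by norm_num) |>.mp hb
    exact hnotbot (by rw [hα0]; exact IntermediateField.adjoin_zero)
  have halg : α ∉ Set.range (algebraMap k l) := by
    intro ⟨t, ht⟩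
    exact hnotbot (IntermediateField.adjoin_simple_eq_bot_iff.mpr
      (IntermediateField.mem_bot.mpr ⟨t, ht⟩))
  -- x ≠ 0
  have hxne : x ≠ 0 := by
    intro h0
    rw [h0] at hxy
    have hby : b ^ 2 * y ^ 3 = b := by linear_combination hxy
    have hyne : y ≠ 0 := by
      intro h; rw [h] at hby
      exact hbne (by linear_combination -hby)
    have hby1 : b * y ^ 3 = 1 := by
      have h1 : b * (b * y ^ 3) = b * 1 := by linear_combination hby
      exact mul_left_cancel₀ hbne h1
    have hc : (y⁻¹) ^ 3 = b := by
      have hy3 : (y : k) ^ 3 ≠ 0 := pow_ne_zero _ hyne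
      rw [inv_pow, inv_eq_iff_eq_inv]
      exact eq_inv_of_mul_eq_one_left (by linear_combination hby1)
    -- ω facts
    have hω3 : ω ^ 3 = 1 := hω.pow_eq_one
    have hωne : ω ≠ 1 := hω.ne_one (by norm_num)
    have hωs : ω ^ 2 + ω + 1 = 0 := by
      have h1 : (ω - 1) * (ω ^ 2 + ω + 1) = 0 := by linear_combination hω3
      rcases mul_eq_zero.mp h1 with h | h
      · exact absurd (sub_eq_zero.mp h) hωne
      · exact h
    set c := y⁻¹ with hcdef
    set c' := algebraMap k l c with hc'
    set ω' := algebraMap k l ω with hω'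
    have hω3' : ω' ^ 3 = 1 := by rw [hω', ← map_pow, hω3, map_one]
    have hωs' : ω' ^ 2 + ω' + 1 = 0 := by
      have := congrArg (algebraMap k l) hωs
      simpa [hω'] using this
    have hfac : (α - c') * (α - c' * ω') * (α - c' * ω' ^ 2) = 0 := by
      have hc3 : c' ^ 3 = algebraMap k l b := by rw [hc', ← map_pow, hc]
      have expand : (α - c') * (α - c' * ω') * (α - c' * ω' ^ 2) =
          α ^ 3 - c' * (1 + ω' + ω' ^ 2) * α ^ 2
          + c' ^ 2 * (ω' + ω' ^ 2 + ω' ^ 3) * α - c' ^ 3 * ω' ^ 3 := by ring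
      have h1 : (1 : l) + ω' + ω' ^ 2 = 0 := by linear_combination hωs'
      have h2 : ω' + ω' ^ 2 + ω' ^ 3 = 0 := by rw [hω3']; linear_combination hωs'
      rw [expand, h1, h2, hω3', hc3, hb]; ring
    rcases mul_eq_zero.mp hfac with h | h
    · rcases mul_eq_zero.mp h with h | h
      · exact halg ⟨c, by rw [← hc']; linear_combination -h⟩
      · exact halg ⟨c * ω, by rw [map_mul, ← hc', ← hω']; linear_combination -h⟩
    · exact halg ⟨c * ω ^ 2, by rw [map_mul, map_pow, ← hc', ← hω']; linear_combination -h⟩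
  -- norm of α is b
  have hnα : Algebra.norm k α = b := by
    have := norm_cubic_aux hdim α hgen (X ^ 3 - C b)
      (by simpa using monic_X_pow_sub_C b (by norm_num)) (by simp) (by simp [hb])
    simpa using this
  -- norm of 1 - yα
  have hn1 : Algebra.norm k (1 - algebraMap k l y * α) = 1 - b * y ^ 3 := by
    rcases eq_or_ne y 0 with hy0 | hyne
    · simp [hy0]
    · set c : k := y⁻¹ with hcdef
      set β : l := α - algebraMap k l c with hβ
      have hgenβ : IntermediateField.adjoin k {β} = ⊤ := by
        rw [eq_top_iff, ← hgen]
        refine IntermediateField.adjoin_simple_le_iff.mpr ?_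
        have h1 : β ∈ IntermediateField.adjoin k {β} :=
          IntermediateField.mem_adjoin_simple_self k β
        have h2 : algebraMap k l c ∈ IntermediateField.adjoin k {β} :=
          IntermediateField.algebraMap_mem _ c
        have := add_mem h1 h2
        rwa [hβ, sub_add_cancel] at this
      have hmon : ((X + C c) ^ 3 - C b : k[X]).Monic :=
        ((monic_X_add_C c).pow 3).sub_of_left (by
          rw [degree_pow, degree_X_add_C]
          exact lt_of_le_of_lt degree_C_le (by norm_num))
      have hdeg3 : ((X + C c) ^ 3 - C b : k[X]).natDegree = 3 := by
        rw [show ((X + C c) ^ 3 - C b : k[X]) = (X + C c) ^ 3 - C b from rfl,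
          natDegree_sub_C, natDegree_pow, natDegree_X_add_C]
      have hroot : Polynomial.aeval β ((X + C c) ^ 3 - C b) = 0 := by
        simp only [map_sub, map_pow, map_add, aeval_X, aeval_C, hβ]
        rw [sub_add_cancel, hb, sub_self]
      have hnβ := norm_cubic_aux hdim β hgenβ _ hmon hdeg3 hroot
      have hcoeff : ((X + C c) ^ 3 - C b : k[X]).coeff 0 = c ^ 3 - b := by
        rw [coeff_zero_eq_eval_zero]; simp
      rw [hcoeff] at hnβ
      have hrepr : 1 - algebraMap k l y * α = algebraMap k l (-y) * β := by
        rw [hβ, hcdef]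
        rw [map_neg, neg_mul, mul_sub, ← map_mul]
        rw [mul_inv_cancel₀ hyne, map_one]; ring
      rw [hrepr, map_mul, hnβ, Algebra.norm_algebraMap, hdim]
      have hyc : y ^ 3 * c ^ 3 = 1 := by
        rw [hcdef, ← mul_pow, mul_inv_cancel₀ hyne, one_pow]
      linear_combination hyc
  -- assemble
  set z : l := algebraMap k l x⁻¹ * (α * (1 - algebraMap k l y * α)) with hz
  have hnz : Algebra.norm k z = a := by
    rw [hz, map_mul, map_mul, hnα, hn1, Algebra.norm_algebraMap, hdim]
    field_simp
    linear_combination -hxy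
  exact ⟨z, fun h => ha (by rw [← hnz, h]; exact Algebra.norm_eq_zero_iff.mpr rfl), hnz⟩
end

section
/- Let k be a field containing a primitive d-th root of unity with char k ∤ d, and let α be an element of an extension field with α^d = b ∈ k and [k(α):k] = d. If γ ∈ k and r' is an integer with 1 ≤ r' ≤ d−1 such that γ^d = b^{r'}, then a contradiction follows; i.e. b^{r'} is not a d-th power in k for 1 ≤ r' ≤ d−1. -/
theorem stmt_8 (d : ℕ) (hdpos : 0 < d)
    (k l : Type*) [Field k] [Field l] [Algebra k l]
    (hchar : (d : k) ≠ 0) (ω : k) (hω : IsPrimitiveRoot ω d)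
    (α : l) (b : k) (hb : α ^ d = algebraMap k l b)
    (hdeg : (minpoly k α).natDegree = d)
    (r' : ℕ) (hr1 : 1 ≤ r') (hr2 : r' ≤ d - 1)
    (γ : k) (hγ : γ ^ d = b ^ r') : False := by
  have hrd : r' < d := by omega
  have hd2 : 2 ≤ d := by omega
  -- γ ≠ 0
  have hγ0 : γ ≠ 0 := by
    rintro rfl
    have hb0 : b = 0 := by
      have := hγ.symm
      rw [zero_pow (by omega : d ≠ 0)] at this
      exact pow_eq_zero_iff (by omega : r' ≠ 0) |>.mp this
    subst hb0
    rw [map_zero] at hb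
    have hα0 : α = 0 := pow_eq_zero_iff (by omega : d ≠ 0) |>.mp hb
    subst hα0
    rw [minpoly.zero] at hdeg
    simp [Polynomial.natDegree_X] at hdeg
    omega
  have hγl0 : algebraMap k l γ ≠ 0 := by
    simpa using (map_ne_zero_iff _ (algebraMap k l).injective).mpr hγ0
  -- primitive root in l
  haveI : NeZero d := ⟨by omega⟩
  have hωl : IsPrimitiveRoot (algebraMap k l ω) d :=
    hω.map_of_injective (algebraMap k l).injective
  -- u^d = 1
  have hud : (α ^ r' / algebraMap k l γ) ^ d = 1 := by
    rw [div_pow, ← pow_mul, mul_comm r' d, pow_mul, hb, ← map_pow, ← map_pow, ← hγ]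
    exact div_self (by simpa using pow_ne_zero d hγl0)
  obtain ⟨i, hi, hiu⟩ := hωl.eq_pow_of_pow_eq_one hud
  have key : α ^ r' = algebraMap k l (ω ^ i * γ) := by
    have : (algebraMap k l ω) ^ i * algebraMap k l γ = α ^ r' := by
      rw [hiu]; field_simp
    rw [map_mul, map_pow, this]
  -- α is a root of X^r' - C (ω^i * γ)
  set c : k := ω ^ i * γ with hc
  have haev : Polynomial.aeval α (Polynomial.X ^ r' - Polynomial.C c) = 0 := by
    simp [key]
  have hdvd := minpoly.dvd k α haev
  have hne : (Polynomial.X ^ r' - Polynomial.C c : Polynomial k) ≠ 0 :=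
    (Polynomial.monic_X_pow_sub_C c (by omega : r' ≠ 0)).ne_zero
  have hle := Polynomial.natDegree_le_of_dvd hdvd hne
  rw [Polynomial.natDegree_X_pow_sub_C, hdeg] at hle
  omega
end

section
/- Let k be a field of characteristic ≠ 3 containing a primitive cube root of unity ω, and let F = k(x, y, z, t) be the rational function field in four variables. Set a = x^3 + y^3·t + z^3·t^2 − 3·x·y·z·t. Then there are no u, v, w ∈ k[x,y,z,t] with w ≠ 0 such that a·u^3 + t·v^3 = w^3. -/
open MvPolynomial in
theorem stmt_10 (k : Type*) [Field k] (hchar : (3 : k) ≠ 0)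
    (ω : k) (hω : IsPrimitiveRoot ω 3) :
    ¬ ∃ u v w : MvPolynomial (Fin 4) k, w ≠ 0 ∧
      (X 0 ^ 3 + X 1 ^ 3 * X 3 + X 2 ^ 3 * X 3 ^ 2
          - 3 * X 0 * X 1 * X 2 * X 3 : MvPolynomial (Fin 4) k) * u ^ 3
        + X 3 * v ^ 3 = w ^ 3 := by
  rintro ⟨u, v, w, hw, heq⟩
  set E := (MvPolynomial.renameEquiv k (finRotate 4)).trans (MvPolynomial.finSuccEquiv k 3) with hE
  have r0 : finRotate 4 (0 : Fin 4) = Fin.succ (0 : Fin 3) := by decide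
  have r1 : finRotate 4 (1 : Fin 4) = Fin.succ (1 : Fin 3) := by decide
  have r2 : finRotate 4 (2 : Fin 4) = Fin.succ (2 : Fin 3) := by decide
  have r3 : finRotate 4 (3 : Fin 4) = (0 : Fin 4) := by decide
  have h3 : E (X 3) = Polynomial.X := by
    simp only [hE, AlgEquiv.trans_apply, MvPolynomial.renameEquiv_apply, MvPolynomial.rename_X,
      r3, MvPolynomial.finSuccEquiv_X_zero]
  have h0 : E (X 0) = Polynomial.C (X 0) := by
    simp only [hE, AlgEquiv.trans_apply, MvPolynomial.renameEquiv_apply, MvPolynomial.rename_X,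
      r0, MvPolynomial.finSuccEquiv_X_succ]
  have h1 : E (X 1) = Polynomial.C (X 1) := by
    simp only [hE, AlgEquiv.trans_apply, MvPolynomial.renameEquiv_apply, MvPolynomial.rename_X,
      r1, MvPolynomial.finSuccEquiv_X_succ]
  have h2 : E (X 2) = Polynomial.C (X 2) := by
    simp only [hE, AlgEquiv.trans_apply, MvPolynomial.renameEquiv_apply, MvPolynomial.rename_X,
      r2, MvPolynomial.finSuccEquiv_X_succ]
  have key := congrArg E heq
  simp only [map_add, map_mul, map_sub, map_pow, map_ofNat, h0, h1, h2, h3] at key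
  set A : Polynomial (MvPolynomial (Fin 3) k) :=
    Polynomial.C (X 0) ^ 3 + Polynomial.C (X 1) ^ 3 * Polynomial.X
      + Polynomial.C (X 2) ^ 3 * Polynomial.X ^ 2
      - 3 * Polynomial.C (X 0) * Polynomial.C (X 1) * Polynomial.C (X 2) * Polynomial.X with hA
  set U := E u with hU
  set V := E v with hVd
  set W := E w with hWd
  have hAdeg : A.natDegree = 2 := by rw [hA]; compute_degree!
  have hAne : A ≠ 0 := by
    intro h; rw [h] at hAdeg; simp at hAdeg
  have hW : W ≠ 0 := by
    simp only [hWd, ne_eq, EmbeddingLike.map_eq_zero_iff]; exact hw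
  -- key : A * U ^ 3 + Polynomial.X * V ^ 3 = W ^ 3
  have hdW : (W ^ 3).natDegree = 3 * W.natDegree := by
    rw [Polynomial.natDegree_pow]
  by_cases hu : U = 0
  · by_cases hv : V = 0
    · rw [hu, hv] at key
      simp at key
      exact hW (pow_eq_zero_iff (by norm_num)|>.mp key.symm)
    · rw [hu] at key
      simp only [ne_eq, OfNat.ofNat_ne_zero, not_false_eq_true, zero_pow, mul_zero, zero_add] at key
      have : (Polynomial.X * V ^ 3).natDegree = 1 + 3 * V.natDegree := by
        rw [Polynomial.natDegree_mul Polynomial.X_ne_zero (pow_ne_zero _ hv),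
          Polynomial.natDegree_pow, Polynomial.natDegree_X]
      rw [key, hdW] at this
      omega
  · have hAU : (A * U ^ 3).natDegree = 2 + 3 * U.natDegree := by
      rw [Polynomial.natDegree_mul hAne (pow_ne_zero _ hu), Polynomial.natDegree_pow, hAdeg]
    by_cases hv : V = 0
    · rw [hv] at key
      simp only [ne_eq, OfNat.ofNat_ne_zero, not_false_eq_true, zero_pow, mul_zero, add_zero] at key
      rw [key, hdW] at hAU
      omega
    · have hXV : (Polynomial.X * V ^ 3).natDegree = 1 + 3 * V.natDegree := by
        rw [Polynomial.natDegree_mul Polynomial.X_ne_zero (pow_ne_zero _ hv),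
          Polynomial.natDegree_pow, Polynomial.natDegree_X]
      rcases lt_trichotomy (A * U ^ 3).natDegree (Polynomial.X * V ^ 3).natDegree with h | h | h
      · have := Polynomial.natDegree_add_eq_right_of_natDegree_lt h
        rw [key, hdW, hXV] at this
        omega
      · rw [hAU, hXV] at h; omega
      · have := Polynomial.natDegree_add_eq_left_of_natDegree_lt h
        rw [key, hdW, hAU] at this
        omega
end

section
/- Let k be a field of characteristic ≠ 3 and let a = x^3 + y^3·t + z^3·t^2 − 3·x·y·z·t ∈ k[x,y,z,t]. Then there are no polynomials u, v, w ∈ k[x,y,z,t] with gcd(u,v,w) = 1 and (u,v,w) ≠ (0,0,0) such that a·u^3 + t·v^3 = t^2·w^3. -/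
open MvPolynomial in
theorem stmt_11 (k : Type*) [Field k] (hchar : (3 : k) ≠ 0) :
    ¬ ∃ u v w : MvPolynomial (Fin 4) k,
      (∀ q : MvPolynomial (Fin 4) k, q ∣ u → q ∣ v → q ∣ w → IsUnit q) ∧
      (u, v, w) ≠ (0, 0, 0) ∧
      (X 0 ^ 3 + X 1 ^ 3 * X 3 + X 2 ^ 3 * X 3 ^ 2
          - 3 * X 0 * X 1 * X 2 * X 3 : MvPolynomial (Fin 4) k) * u ^ 3
        + X 3 * v ^ 3 = X 3 ^ 2 * w ^ 3 := by
  rintro ⟨u, v, w, hcop, -, heq⟩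
  set t : MvPolynomial (Fin 4) k := X 3 with ht
  set a : MvPolynomial (Fin 4) k :=
    X 0 ^ 3 + X 1 ^ 3 * X 3 + X 2 ^ 3 * X 3 ^ 2 - 3 * X 0 * X 1 * X 2 * X 3 with ha
  have hprime : Prime t := by
    let e : MvPolynomial (Fin 4) k ≃ₐ[k] Polynomial (MvPolynomial (Fin 3) k) :=
      (renameEquiv k (Equiv.swap (3 : Fin 4) 0)).trans (finSuccEquiv k 3)
    rw [← MulEquiv.prime_iff e.toMulEquiv]
    have he : e.toMulEquiv t = Polynomial.X := by
      show e (X 3) = Polynomial.X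
      simp only [e, AlgEquiv.trans_apply, renameEquiv_apply, rename_X,
        Equiv.swap_apply_left, finSuccEquiv_X_zero]
    rw [he]
    exact Polynomial.prime_X
  have ht0 : t ≠ 0 := hprime.ne_zero
  have hta : ¬ t ∣ a := by
    intro h
    rw [ht, ha] at h
    have h2 := map_dvd (aeval (![X 0, X 1, X 2, 0]) :
      MvPolynomial (Fin 4) k →ₐ[k] MvPolynomial (Fin 4) k) h
    simp only [map_add, map_sub, map_mul, map_pow, aeval_X, Matrix.cons_val_zero,
      Matrix.cons_val_one, Matrix.head_cons, Matrix.cons_val_two, Matrix.tail_cons,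
      Matrix.cons_val_three, zero_dvd_iff] at h2
    exact pow_ne_zero 3 (MvPolynomial.X_ne_zero (0 : Fin 4)) (by linear_combination h2)
  have htu : t ∣ u := by
    refine hprime.dvd_of_dvd_pow (n := 3) ((hprime.dvd_mul.mp ?_).resolve_left hta)
    exact ⟨t * w ^ 3 - v ^ 3, by linear_combination heq⟩
  obtain ⟨u₀, rfl⟩ := htu
  have heq2 : a * t ^ 2 * u₀ ^ 3 + v ^ 3 = t * w ^ 3 :=
    mul_left_cancel₀ ht0 (by linear_combination heq)
  have htv : t ∣ v :=
    hprime.dvd_of_dvd_pow (n := 3) ⟨w ^ 3 - a * t * u₀ ^ 3, by linear_combination heq2⟩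
  obtain ⟨v₀, rfl⟩ := htv
  have heq3 : a * t * u₀ ^ 3 + t ^ 2 * v₀ ^ 3 = w ^ 3 :=
    mul_left_cancel₀ ht0 (by linear_combination heq2)
  have htw : t ∣ w :=
    hprime.dvd_of_dvd_pow (n := 3) ⟨a * u₀ ^ 3 + t * v₀ ^ 3, by linear_combination -heq3⟩
  exact hprime.not_unit (hcop t ⟨u₀, rfl⟩ ⟨v₀, rfl⟩ htw)
end

section
/- Let k be a field of characteristic ≠ 3. There are no polynomials p, q, r ∈ k[y,z,t] with gcd(p,q,r) = 1 and (p,q,r) ≠ (0,0,0) such that (t·y^3 + t^2·z^3)·p^3 + t^2·q^3 = r^3. -/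
open MvPolynomial in
theorem stmt_12 (k : Type*) [Field k] (hchar : (3 : k) ≠ 0) :
    ¬ ∃ p q r : MvPolynomial (Fin 3) k,
      (∀ s : MvPolynomial (Fin 3) k, s ∣ p → s ∣ q → s ∣ r → IsUnit s) ∧
      (p, q, r) ≠ (0, 0, 0) ∧
      (X 2 * X 0 ^ 3 + X 2 ^ 2 * X 1 ^ 3 : MvPolynomial (Fin 3) k) * p ^ 3
        + X 2 ^ 2 * q ^ 3 = r ^ 3 := by
  rintro ⟨p, q, r, hcop, -, heq⟩
  have htp : Prime (X 2 : MvPolynomial (Fin 3) k) := by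
    let e := (renameEquiv k (Equiv.swap (0 : Fin 3) 2)).trans (finSuccEquiv k 2)
    rw [← MulEquiv.prime_iff e.toMulEquiv]
    have : e (X 2) = Polynomial.X := by
      simp [e, renameEquiv_apply, rename_X, Equiv.swap_apply_right, finSuccEquiv_X_zero]
    show Prime (e (X 2))
    rw [this]
    exact Polynomial.prime_X
  have ht0 : (X 2 : MvPolynomial (Fin 3) k) ≠ 0 := htp.ne_zero
  -- t ∣ r
  have hdr : (X 2 : MvPolynomial (Fin 3) k) ∣ r := by
    refine htp.dvd_of_dvd_pow (n := 3) ⟨X 0 ^ 3 * p ^ 3 + X 2 * X 1 ^ 3 * p ^ 3 + X 2 * q ^ 3, ?_⟩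
    linear_combination -heq
  obtain ⟨r0, hr0⟩ := hdr
  have heq1 : (X 0 ^ 3 + X 2 * X 1 ^ 3) * p ^ 3 + X 2 * q ^ 3
      = X 2 ^ 2 * r0 ^ 3 := by
    refine mul_left_cancel₀ ht0 ?_
    rw [hr0] at heq
    linear_combination heq
  -- t ∣ p
  have hndy : ¬ ((X 2 : MvPolynomial (Fin 3) k) ∣ X 0) := by
    rintro ⟨c, hc⟩
    have h2 := congrArg (eval (fun i : Fin 3 => if i = 2 then 0 else 1)) hc
    simp [eval_X] at h2
  have hdp : (X 2 : MvPolynomial (Fin 3) k) ∣ p := by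
    have h3 : (X 2 : MvPolynomial (Fin 3) k) ∣ (X 0 * p) ^ 3 := by
      refine ⟨X 2 * r0 ^ 3 - q ^ 3 - X 1 ^ 3 * p ^ 3, ?_⟩
      linear_combination heq1
    rcases htp.dvd_mul.mp (htp.dvd_of_dvd_pow h3) with h | h
    · exact absurd h hndy
    · exact h
  obtain ⟨p0, hp0⟩ := hdp
  have heq2 : (X 0 ^ 3 + X 2 * X 1 ^ 3) * X 2 ^ 2 * p0 ^ 3 + q ^ 3
      = X 2 * r0 ^ 3 := by
    refine mul_left_cancel₀ ht0 ?_
    rw [hp0] at heq1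
    linear_combination heq1
  -- t ∣ q
  have hdq : (X 2 : MvPolynomial (Fin 3) k) ∣ q := by
    refine htp.dvd_of_dvd_pow (n := 3)
      ⟨r0 ^ 3 - (X 0 ^ 3 + X 2 * X 1 ^ 3) * X 2 * p0 ^ 3, ?_⟩
    linear_combination heq2
  exact htp.not_unit (hcop (X 2) ⟨p0, hp0⟩ hdq ⟨r0, hr0⟩)
end
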